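/- Let β = q + α with q ∈ ℕ and α ∈ (0,1], β ≥ 1/2, and let F be the class of functions f: [0,1] → ℝ with ‖f^(i)‖_∞ ≤ B for 0 ≤ i ≤ q and f^(q) α-Hölder with coefficient λ. Set δ_x = 2(q!γ/(2λ))^{1/β} and δ_y = γ/e. Then the set F^(0) of piecewise-clipped-polynomials (degree ≤ q, coefficients in the grid {−B + jδ_y : 0 ≤ j ≤ 2B/δ_y}, clipped to [−B,B], constant pieces on the intervals I_a of length δ_x) is a γ-net of (F, ‖·‖_∞). -/

import Mathlib

open Real Set Finset Nat

/-! On the interval of index `a`, compare `f` with its Taylor polynomial of degree `q` at the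
center `x_a`. Lagrange's remainder of order `q - 1` and the Hölder condition on `f⁽q⁾` bound the
error by `lam (δx / 2) ^ β / q!`, which the choice of `δx` makes `γ / 2`. The Taylor coefficients
lie in `[-B, B]`; rounding them to the grid moves the polynomial by at most
`(δy / 2) ∑ (δx / 2) ^ i / i! ≤ (δy / 2) e ^ (δx / 2) ≤ γ / 2`, as `δx ≤ 1` and `δy = γ / e`.
Clipping to `[-B, B]` only brings the value closer to `f x ∈ [-B, B]`. -/

theorem taylorWithinEval_uIcc_eq_sum {f : ℝ → ℝ} {n : ℕ} {c x : ℝ} (hf : ContDiff ℝ n f)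
    (hcx : c ≠ x) :
    taylorWithinEval f n (uIcc c x) c x =
      ∑ i ∈ range (n + 1), iteratedDeriv i f c / i ! * (x - c) ^ i := by
  rw [taylor_within_apply]
  refine sum_congr rfl fun i hi => ?_
  have hin : (i : WithTop ℕ∞) ≤ n := by exact_mod_cast Nat.lt_succ_iff.mp (mem_range.mp hi)
  rw [iteratedDerivWithin_eq_iteratedDeriv (uniqueDiffOn_uIcc hcx) (hf.contDiffAt.of_le hin)
    left_mem_uIcc, smul_eq_mul]
  ring

theorem abs_sub_taylor_le_of_holder {f : ℝ → ℝ} {q : ℕ} {α lam c x : ℝ} (hα : 0 ≤ α)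
    (hlam : 0 ≤ lam) (hf : ContDiff ℝ q f)
    (hholder : ∀ t ∈ uIcc c x, |iteratedDeriv q f t - iteratedDeriv q f c| ≤ lam * |t - c| ^ α) :
    |f x - ∑ i ∈ range (q + 1), iteratedDeriv i f c / i ! * (x - c) ^ i|
      ≤ lam * |x - c| ^ ((q : ℝ) + α) / q ! := by
  rcases eq_or_ne c x with rfl | hcx
  · simpa [sum_range_succ'] using (by positivity : (0 : ℝ) ≤ lam * 0 ^ ((q : ℝ) + α) / q !)
  cases q with
  | zero => simpa using hholder x right_mem_uIcc
  | succ n =>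
    obtain ⟨t, ht, hrem⟩ := taylor_mean_remainder_lagrange_iteratedDeriv hcx hf.contDiffOn
    rw [taylorWithinEval_uIcc_eq_sum (hf.of_le (by exact_mod_cast n.le_succ)) hcx] at hrem
    have hsplit : f x - ∑ i ∈ range (n + 1 + 1), iteratedDeriv i f c / i ! * (x - c) ^ i =
        (iteratedDeriv (n + 1) f t - iteratedDeriv (n + 1) f c) * (x - c) ^ (n + 1) / (n + 1)! := by
      rw [sum_range_succ, ← sub_sub, hrem]
      ring
    have ht' : t ∈ uIcc c x := uIoo_subset_uIcc_self ht
    have hpow : |x - c| ^ ((↑(n + 1) : ℝ) + α) = |x - c| ^ α * |x - c| ^ (n + 1) := by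
      rw [rpow_add (abs_pos.2 (sub_ne_zero.2 hcx.symm)), rpow_natCast, mul_comm]
    rw [hsplit, hpow, abs_div, abs_mul, abs_pow, Nat.abs_cast, ← mul_assoc]
    gcongr
    calc |iteratedDeriv (n + 1) f t - iteratedDeriv (n + 1) f c| ≤ lam * |t - c| ^ α :=
          hholder t ht'
      _ ≤ lam * |x - c| ^ α :=
          mul_le_mul_of_nonneg_left
            (rpow_le_rpow (abs_nonneg _) (abs_sub_left_of_mem_uIcc ht') hα) hlam

theorem abs_sub_taylor_le_of_holderOn {f : ℝ → ℝ} {s : Set ℝ} {q : ℕ} {α lam r c x : ℝ}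
    (hα : 0 ≤ α) (hlam : 0 ≤ lam) (hf : ContDiff ℝ q f) (hs : s.OrdConnected)
    (hholder : ∀ y ∈ s, ∀ z ∈ s, |iteratedDeriv q f y - iteratedDeriv q f z| ≤ lam * |y - z| ^ α)
    (hc : c ∈ s) (hx : x ∈ s) (hxc : |x - c| ≤ r) :
    |f x - ∑ i ∈ range (q + 1), iteratedDeriv i f c / i ! * (x - c) ^ i|
      ≤ lam * r ^ ((q : ℝ) + α) / q ! := by
  refine (abs_sub_taylor_le_of_holder hα hlam hf
    fun t ht => hholder t (hs.uIcc_subset hc hx ht) c hc).trans ?_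
  gcongr

theorem exists_grid_point_near {B δ v : ℝ} {J : ℕ} (hδ : 0 < δ) (hJ : (J : ℝ) * δ = 2 * B)
    (hv : |v| ≤ B) : ∃ j ≤ J, |v - (-B + j * δ)| ≤ δ / 2 := by
  obtain ⟨hvl, hvu⟩ := abs_le.1 hv
  set r := (v + B) / δ
  have hr : r * δ = v + B := div_mul_cancel₀ _ hδ.ne'
  have hr0 : 0 ≤ r := div_nonneg (by linarith) hδ.le
  have hrJ : r ≤ J := (div_le_iff₀ hδ).2 (by linarith)
  have hlo : (⌊r + 1 / 2⌋₊ : ℝ) ≤ r + 1 / 2 := Nat.floor_le (by linarith)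
  have hhi : r + 1 / 2 < ⌊r + 1 / 2⌋₊ + 1 := Nat.lt_floor_add_one _
  refine ⟨⌊r + 1 / 2⌋₊, ?_, ?_⟩
  · exact Nat.lt_add_one_iff.1 ((Nat.floor_lt (by linarith)).2 (by push_cast; linarith))
  · have he : v - (-B + ⌊r + 1 / 2⌋₊ * δ) = (r - ⌊r + 1 / 2⌋₊) * δ := by rw [sub_mul, hr]; ring
    rw [he, abs_le]
    constructor <;> nlinarith

theorem abs_sub_clip_le {u v B : ℝ} (hu : |u| ≤ B) : |u - max (-B) (min B v)| ≤ |u - v| := by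
  have hclip : max (-B) (min B u) = u := by
    obtain ⟨hl, hr⟩ := abs_le.1 hu
    rw [min_eq_right hr, max_eq_right hl]
  calc |u - max (-B) (min B v)| = |max (min B u) (-B) - max (min B v) (-B)| := by
        rw [max_comm (min B u), max_comm (min B v), hclip]
    _ ≤ |min B u - min B v| := abs_max_sub_max_le_abs _ _ _
    _ ≤ max |B - B| |u - v| := abs_min_sub_min_le_max _ _ _ _
    _ = |u - v| := by simp

theorem abs_sum_sub_sum_le_mul_exp {v b : ℕ → ℝ} {n : ℕ} {h ε r : ℝ}
    (hvb : ∀ i, |v i - b i| ≤ ε) (hh : |h| ≤ r) :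
    |∑ i ∈ range n, v i / i ! * h ^ i - ∑ i ∈ range n, b i / i ! * h ^ i| ≤ ε * exp r := by
  have hε : 0 ≤ ε := (abs_nonneg _).trans (hvb 0)
  have hr : 0 ≤ r := (abs_nonneg _).trans hh
  calc |∑ i ∈ range n, v i / i ! * h ^ i - ∑ i ∈ range n, b i / i ! * h ^ i|
      = |∑ i ∈ range n, (v i - b i) * h ^ i / i !| := by
        rw [← sum_sub_distrib]; congr 1; refine sum_congr rfl fun i _ => ?_; ring
    _ ≤ ∑ i ∈ range n, |(v i - b i) * h ^ i / i !| := abs_sum_le_sum_abs _ _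
    _ ≤ ∑ i ∈ range n, ε * (r ^ i / i !) := by
        refine sum_le_sum fun i _ => ?_
        rw [abs_div, abs_mul, abs_pow, Nat.abs_cast, mul_div_assoc]
        gcongr
        exact hvb i
    _ = ε * ∑ i ∈ range n, r ^ i / i ! := (mul_sum _ _ _).symm
    _ ≤ ε * exp r := by gcongr; exact sum_le_exp_of_nonneg hr n

theorem abs_sub_center_floor_le {x δ : ℝ} (hx : 0 ≤ x) (hδ : 0 < δ) :
    |x - ((⌊x / δ⌋₊ : ℝ) + 1 / 2) * δ| ≤ δ / 2 := by
  have hlo : (⌊x / δ⌋₊ : ℝ) * δ ≤ x := (le_div_iff₀ hδ).1 (Nat.floor_le (by positivity))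
  have hhi : x < (⌊x / δ⌋₊ + 1 : ℝ) * δ := (div_lt_iff₀ hδ).1 (Nat.lt_floor_add_one _)
  rw [abs_le]
  constructor <;> nlinarith

theorem holder_step_eq {q : ℕ} {α lam γ β δ : ℝ} (hα : 0 < α) (hβ : β = q + α) (hlam : 0 < lam)
    (hγ : 0 < γ) (hδ : δ = 2 * (q ! * γ / (2 * lam)) ^ (1 / β)) :
    lam * (δ / 2) ^ ((q : ℝ) + α) / q ! = γ / 2 := by
  have hβ0 : β ≠ 0 := by rw [hβ]; positivity
  rw [hδ, mul_div_cancel_left₀ _ two_ne_zero, ← hβ, ← rpow_mul (by positivity),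
    one_div_mul_cancel hβ0, rpow_one]
  field_simp

theorem abs_sub_clip_le_add_mul_exp {u B ε r h : ℝ} {n : ℕ} {v b : ℕ → ℝ} (hu : |u| ≤ B)
    (hvb : ∀ i, |v i - b i| ≤ ε) (hh : |h| ≤ r) :
    |u - max (-B) (min B (∑ i ∈ range n, b i / i ! * h ^ i))|
      ≤ |u - ∑ i ∈ range n, v i / i ! * h ^ i| + ε * exp r :=
  calc _ ≤ |u - ∑ i ∈ range n, b i / i ! * h ^ i| := abs_sub_clip_le hu
    _ ≤ _ := (abs_sub_le u (∑ i ∈ range n, v i / i ! * h ^ i) _).trans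
        (add_le_add le_rfl (abs_sum_sub_sum_le_mul_exp hvb hh))

theorem add_one_half_mul_mem_Icc {a A : ℕ} {δ : ℝ} (hδ : 0 ≤ δ) (hA : (A : ℝ) * δ = 1)
    (ha : a < A) : ((a : ℝ) + 1 / 2) * δ ∈ Set.Icc 0 1 := by
  have : (a : ℝ) + 1 ≤ A := by exact_mod_cast ha
  constructor <;> nlinarith

/-- The point `x = 1` alone falls into the interval of index `A`, whose center lies outside
`[0, 1]`; there the constant `f 1` is used instead. -/
noncomputable def localTaylorCoeff (f : ℝ → ℝ) (q A : ℕ) (δ : ℝ) (a i : ℕ) : ℝ :=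
  if a < A ∧ i ≤ q then iteratedDeriv i f ((a + 1 / 2) * δ) else if i = 0 then f 1 else 0

theorem abs_localTaylorCoeff_le {f : ℝ → ℝ} {q A : ℕ} {δ B : ℝ} (hδ : 0 ≤ δ)
    (hA : (A : ℝ) * δ = 1)
    (hbound : ∀ i ≤ q, ∀ x ∈ Set.Icc (0 : ℝ) 1, |iteratedDeriv i f x| ≤ B) (a i : ℕ) :
    |localTaylorCoeff f q A δ a i| ≤ B := by
  have hf : ∀ x ∈ Set.Icc (0 : ℝ) 1, |f x| ≤ B := by simpa using hbound 0 q.zero_le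
  unfold localTaylorCoeff
  split_ifs with ha
  · exact hbound i ha.2 _ (add_one_half_mul_mem_Icc hδ hA ha.1)
  · exact hf 1 (right_mem_Icc.2 zero_le_one)
  · simpa using (abs_nonneg _).trans (hf 1 (right_mem_Icc.2 zero_le_one))

theorem abs_sub_localTaylor_le {f : ℝ → ℝ} {q A : ℕ} {α lam δ ε x : ℝ} (hα : 0 ≤ α)
    (hlam : 0 ≤ lam) (hδ : 0 < δ) (hA : (A : ℝ) * δ = 1) (hf : ContDiff ℝ q f)
    (hholder : ∀ x ∈ Set.Icc (0 : ℝ) 1, ∀ y ∈ Set.Icc (0 : ℝ) 1,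
      |iteratedDeriv q f x - iteratedDeriv q f y| ≤ lam * |x - y| ^ α)
    (hstep : lam * (δ / 2) ^ ((q : ℝ) + α) / q ! ≤ ε) (hx : x ∈ Set.Icc (0 : ℝ) 1) :
    |f x - ∑ i ∈ range (q + 1), localTaylorCoeff f q A δ ⌊x / δ⌋₊ i / i ! *
      (x - (⌊x / δ⌋₊ + 1 / 2) * δ) ^ i| ≤ ε := by
  rcases hx.2.eq_or_lt with rfl | hx1
  · have hfloor : ⌊1 / δ⌋₊ = A := by rw [← hA, mul_div_cancel_right₀ _ hδ.ne', Nat.floor_natCast]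
    rw [hfloor]
    simpa [localTaylorCoeff, sum_range_succ'] using (by positivity : (0 : ℝ) ≤ _).trans hstep
  · have ha : ⌊x / δ⌋₊ < A :=
      (Nat.floor_lt (div_nonneg hx.1 hδ.le)).2 ((div_lt_iff₀ hδ).2 (by rwa [hA]))
    have hcoeff : ∀ i ∈ range (q + 1), localTaylorCoeff f q A δ ⌊x / δ⌋₊ i =
        iteratedDeriv i f ((⌊x / δ⌋₊ + 1 / 2) * δ) := fun i hi =>
      if_pos ⟨ha, Nat.lt_succ_iff.1 (mem_range.1 hi)⟩
    rw [sum_congr rfl fun i hi => by rw [hcoeff i hi]]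
    exact (abs_sub_taylor_le_of_holderOn hα hlam hf ordConnected_Icc hholder
      (add_one_half_mul_mem_Icc hδ.le hA ha) hx (abs_sub_center_floor_le hx.1 hδ)).trans hstep

theorem holder_clipped_polynomial_net_general
    (q : ℕ) (α B lam γ β δx δy : ℝ) (hα : α ∈ Set.Ioc (0 : ℝ) 1)
    (hβ : β = q + α)
    (hlam : 0 < lam) (hγ : 0 < γ)
    (hδx : δx = 2 * ((Nat.factorial q) * γ / (2 * lam)) ^ (1 / β))
    (hδy : δy = γ / Real.exp 1)
    (A J : ℕ) (hA : (A : ℝ) * δx = 1) (hJ : (J : ℝ) * δy = 2 * B)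
    (f : ℝ → ℝ) (hf : ContDiff ℝ q f)
    (hbound : ∀ i ≤ q, ∀ x ∈ Set.Icc (0 : ℝ) 1, |iteratedDeriv i f x| ≤ B)
    (hholder : ∀ x ∈ Set.Icc (0 : ℝ) 1, ∀ y ∈ Set.Icc (0 : ℝ) 1,
      |iteratedDeriv q f x - iteratedDeriv q f y| ≤ lam * |x - y| ^ α) :
    ∃ b : ℕ → ℕ → ℝ,
      (∀ a : ℕ, ∀ i ≤ q, ∃ j : ℕ, j ≤ J ∧ b a i = -B + j * δy) ∧
      ∀ x ∈ Set.Icc (0 : ℝ) 1,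
        |f x - max (-B) (min B (∑ i ∈ Finset.range (q + 1),
            b ⌊x / δx⌋₊ i / (Nat.factorial i) *
              (x - ((⌊x / δx⌋₊ : ℝ) + 1 / 2) * δx) ^ i))| ≤ γ := by
  have hδx0 : 0 < δx := by rw [hδx]; positivity
  have hδy0 : 0 < δy := by rw [hδy]; positivity
  have hγδy : δy * exp 1 = γ := by rw [hδy, div_mul_cancel₀ _ (exp_pos 1).ne']
  have hδx1 : δx ≤ 1 := by
    have : (1 : ℝ) ≤ A := by exact_mod_cast Nat.one_le_iff_ne_zero.2 (by rintro rfl; simp at hA)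
    nlinarith
  choose j hjJ hj using fun a i =>
    exists_grid_point_near hδy0 hJ (abs_localTaylorCoeff_le hδx0.le hA hbound a i)
  refine ⟨fun a i => -B + j a i * δy, fun a i _ => ⟨j a i, hjJ a i, rfl⟩, fun x hx => ?_⟩
  have hfx : |f x| ≤ B := by simpa using hbound 0 q.zero_le x hx
  have htaylor := abs_sub_localTaylor_le hα.1.le hlam.le hδx0 hA hf hholder
    (holder_step_eq hα.1 hβ hlam hγ hδx).le hx
  calc _ ≤ γ / 2 + δy / 2 * exp (δx / 2) :=
        (abs_sub_clip_le_add_mul_exp hfx (hj _) (abs_sub_center_floor_le hx.1 hδx0)).trans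
          (add_le_add htaylor le_rfl)
    _ ≤ γ := by
        have : exp (δx / 2) ≤ exp 1 := exp_le_exp.2 (by linarith)
        nlinarith

/-- Piecewise clipped polynomials form a `γ`-net of a Hölder class. Let `β = q + α ≥ 1/2`,
`δx = 2 (q! γ / (2 lam))^{1/β}`, `δy = γ/e`. For every `f : [0,1] → ℝ` with all derivatives
up to order `q` bounded by `B` and `f⁽q⁾` `α`-Hölder with coefficient `lam`, there is a
choice of grid coefficients `b a i ∈ {−B + j δy : 0 ≤ j ≤ 2B/δy}` such that on each
interval `I_a = [(a−1)δx, aδx)` (indexed by `a(x) = ⌊x/δx⌋`, with center `x_a`) the clipped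
polynomial `[Σ_{i≤q} (b a i / i!)(x − x_a)^i]_B` is within `γ` of `f` in sup norm. -/
theorem holder_clipped_polynomial_net
    (q : ℕ) (α B lam γ β δx δy : ℝ) (hα : α ∈ Set.Ioc (0 : ℝ) 1)
    (hβ : β = q + α) (hβhalf : (1 : ℝ) / 2 ≤ β)
    (hB : 0 < B) (hlam : 0 < lam) (hγ : 0 < γ)
    (hδx : δx = 2 * ((Nat.factorial q) * γ / (2 * lam)) ^ (1 / β))
    (hδy : δy = γ / Real.exp 1)
    (A J : ℕ) (hA : (A : ℝ) * δx = 1) (hJ : (J : ℝ) * δy = 2 * B)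
    (f : ℝ → ℝ) (hf : ContDiff ℝ q f)
    (hbound : ∀ i ≤ q, ∀ x ∈ Set.Icc (0 : ℝ) 1, |iteratedDeriv i f x| ≤ B)
    (hholder : ∀ x ∈ Set.Icc (0 : ℝ) 1, ∀ y ∈ Set.Icc (0 : ℝ) 1,
      |iteratedDeriv q f x - iteratedDeriv q f y| ≤ lam * |x - y| ^ α) :
    ∃ b : ℕ → ℕ → ℝ,
      (∀ a : ℕ, ∀ i ≤ q, ∃ j : ℕ, j ≤ J ∧ b a i = -B + j * δy) ∧
      ∀ x ∈ Set.Icc (0 : ℝ) 1,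
        |f x - max (-B) (min B (∑ i ∈ Finset.range (q + 1),
            b ⌊x / δx⌋₊ i / (Nat.factorial i) *
              (x - ((⌊x / δx⌋₊ : ℝ) + 1 / 2) * δx) ^ i))| ≤ γ :=
  holder_clipped_polynomial_net_general q α B lam γ β δx δy hα hβ hlam hγ hδx hδy A J hA hJ f hf
    hbound hholder
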